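/- arXiv:1512.03006 — 3 statements merged into one kernel-verified Lean document; each statement's English description precedes it below -/
import Mathlib

section
/- Let μ be a partition of a positive integer d and n a nonnegative integer. For every field F of characteristic zero, dim_F 𝕊_μ(F^n) = dim_ℚ 𝕊_μ(ℚ^n); i.e. the dimension of the Weyl module of an n-dimensional vector space depends only on μ and n, not on the characteristic-zero field. -/
open scoped TensorProduct

/-- Parts of the partition `μ` listed in (weakly) decreasing order; the canonical Young
tableau of shape `μ` has rows of these lengths, with boxes numbered consecutively along rows. -/
def canonicalParts {d : ℕ} (μ : Nat.Partition d) : List ℕ :=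
  (μ.parts.sort (· ≤ ·)).reverse

/-- The row (numbered from `0`) of the box labelled `i` in the canonical Young tableau. -/
def rowIndex {d : ℕ} (μ : Nat.Partition d) (i : ℕ) : ℕ :=
  ((List.range (canonicalParts μ).length).filter
    fun r => ((canonicalParts μ).take (r + 1)).sum ≤ i).length

/-- The column (numbered from `0`) of the box labelled `i` in the canonical Young tableau. -/
def colIndex {d : ℕ} (μ : Nat.Partition d) (i : ℕ) : ℕ :=
  i - ((canonicalParts μ).take (rowIndex μ i)).sum

/-- The row stabilizer `P_μ ⊆ 𝔖_d` of the canonical Young tableau of shape `μ`. -/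
def rowStabilizer {d : ℕ} (μ : Nat.Partition d) : Finset (Equiv.Perm (Fin d)) :=
  Finset.univ.filter fun σ => ∀ i : Fin d, rowIndex μ (σ i) = rowIndex μ (i : ℕ)

/-- The column stabilizer `Q_μ ⊆ 𝔖_d` of the canonical Young tableau of shape `μ`. -/
def colStabilizer {d : ℕ} (μ : Nat.Partition d) : Finset (Equiv.Perm (Fin d)) :=
  Finset.univ.filter fun σ => ∀ i : Fin d, colIndex μ (σ i) = colIndex μ (i : ℕ)

/-- `a_μ = Σ_{σ ∈ P_μ} σ` in the integral group ring `ℤ[𝔖_d]`. -/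
noncomputable def rowSymmetrizer {d : ℕ} (μ : Nat.Partition d) :
    MonoidAlgebra ℤ (Equiv.Perm (Fin d)) :=
  ∑ σ ∈ rowStabilizer μ, MonoidAlgebra.of ℤ (Equiv.Perm (Fin d)) σ

/-- `b_μ = Σ_{σ ∈ Q_μ} sgn(σ)·σ` in the integral group ring `ℤ[𝔖_d]`. -/
noncomputable def colSymmetrizer {d : ℕ} (μ : Nat.Partition d) :
    MonoidAlgebra ℤ (Equiv.Perm (Fin d)) :=
  ∑ σ ∈ colStabilizer μ, (Equiv.Perm.sign σ : ℤ) • MonoidAlgebra.of ℤ (Equiv.Perm (Fin d)) σ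

/-- The Young symmetrizer `c_μ = a_μ · b_μ ∈ ℤ[𝔖_d]`. -/
noncomputable def youngSymmetrizer {d : ℕ} (μ : Nat.Partition d) :
    MonoidAlgebra ℤ (Equiv.Perm (Fin d)) :=
  rowSymmetrizer μ * colSymmetrizer μ

/-- The place-permutation operator `P_σ` on `M^{⊗d}`, determined by
`P_σ (m₁ ⊗ ⋯ ⊗ m_d) = m_{σ(1)} ⊗ ⋯ ⊗ m_{σ(d)}`. -/
noncomputable def placePerm (R : Type*) [CommRing R] (M : Type*) [AddCommGroup M] [Module R M]
    {d : ℕ} (σ : Equiv.Perm (Fin d)) :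
    (⨂[R] _ : Fin d, M) →ₗ[R] ⨂[R] _ : Fin d, M :=
  PiTensorProduct.lift ((PiTensorProduct.tprod R).domDomCongr σ)

@[simp] theorem placePerm_tprod (R : Type*) [CommRing R] (M : Type*) [AddCommGroup M]
    [Module R M] {d : ℕ} (σ : Equiv.Perm (Fin d)) (m : Fin d → M) :
    placePerm R M σ (PiTensorProduct.tprod R m) = PiTensorProduct.tprod R fun i => m (σ i) :=
  PiTensorProduct.lift.tprod m

/-- The operator on `M^{⊗d}` given by the (right, place-permutation) action of an element
`x` of the group ring `ℤ[𝔖_d]`: the element `σ` acts as `P_σ`, extended `ℤ`-linearly. -/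
noncomputable def algAct (R : Type*) [CommRing R] (M : Type*) [AddCommGroup M] [Module R M]
    {d : ℕ} (x : MonoidAlgebra ℤ (Equiv.Perm (Fin d))) :
    (⨂[R] _ : Fin d, M) →ₗ[R] ⨂[R] _ : Fin d, M :=
  x.coeff.sum fun σ n => n • placePerm R M σ

/-- The Weyl module (Schur functor) `𝕊_μ M`: the image `M^{⊗d}·c_μ` of `M^{⊗d}` under the
action of the Young symmetrizer `c_μ`. -/
noncomputable def weylModule (R : Type*) [CommRing R] (M : Type*) [AddCommGroup M] [Module R M]
    {d : ℕ} (μ : Nat.Partition d) : Submodule R (⨂[R] _ : Fin d, M) :=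
  LinearMap.range (algAct R M (youngSymmetrizer μ))

/-!
In the basis of `(Kⁿ)^{⊗d}` formed by the pure tensors `e_{w 1} ⊗ ⋯ ⊗ e_{w d}`, a place
permutation `σ` sends the basis vector of the word `w` to that of `w ∘ σ`. Hence the Young
symmetrizer acts on `(Kⁿ)^{⊗d}` through the image in `K` of a single integer matrix, and
`dim_K 𝕊_μ(Kⁿ)` is the rank of that matrix over `K`. For `ℚ ⊆ F` this rank does not change,
because taking the range of a linear map commutes with the (flat) base change `F ⊗_ℚ -`.
-/
open Module

theorem LinearMap.range_baseChange {R A M N : Type*} [CommRing R] [Ring A] [Algebra R A]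
    [AddCommGroup M] [Module R M] [AddCommGroup N] [Module R N] (f : M →ₗ[R] N) :
    range (f.baseChange A) = (range f).baseChange A := by
  have hsurj : Function.Surjective (f.rangeRestrict.baseChange A) :=
    f.rangeRestrict.lTensor_surjective A f.surjective_rangeRestrict
  rw [Submodule.baseChange, ← range_comp_of_range_eq_top _ (range_eq_top.mpr hsurj),
    ← baseChange_comp]
  rfl

theorem LinearMap.finrank_range_baseChange {K L V W : Type*} [Field K] [Field L] [Algebra K L]
    [AddCommGroup V] [Module K V] [AddCommGroup W] [Module K W] (f : V →ₗ[K] W) :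
    finrank L (range (f.baseChange L)) = finrank K (range f) := by
  rw [range_baseChange, ← (Submodule.toBaseChange.toLinearEquiv L (range f)).finrank_eq,
    finrank_baseChange]

theorem Matrix.rank_map_algebraMap {m n K L : Type*} [Fintype m] [Fintype n]
    [Field K] [Field L] [Algebra K L] (A : Matrix m n K) :
    (A.map (algebraMap K L)).rank = A.rank := by
  classical
  let b := Pi.basisFun K n
  let b' := Pi.basisFun K m
  have hA : A.map (algebraMap K L) = LinearMap.toMatrix (Algebra.TensorProduct.basis L b)
      (Algebra.TensorProduct.basis L b') ((toLin b b' A).baseChange L) := by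
    rw [LinearMap.toMatrix_baseChange, LinearMap.toMatrix_toLin]
  rw [hA, rank_eq_finrank_range_toLin _ (Algebra.TensorProduct.basis L b')
    (Algebra.TensorProduct.basis L b), toLin_toMatrix, LinearMap.finrank_range_baseChange,
    ← rank_eq_finrank_range_toLin]

section PlaceAction

variable (R : Type*) [CommRing R] (n d : ℕ)

noncomputable def tensorPowerBasis :
    Basis (Fin d → Fin n) R (⨂[R] _ : Fin d, (Fin n → R)) :=
  Basis.piTensorProduct fun _ => Pi.basisFun R (Fin n)

theorem placePerm_tensorPowerBasis (σ : Equiv.Perm (Fin d)) (w : Fin d → Fin n) :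
    placePerm R (Fin n → R) σ (tensorPowerBasis R n d w) = tensorPowerBasis R n d (w ∘ σ) := by
  simp [tensorPowerBasis]

def algActMatrix (c : MonoidAlgebra ℤ (Equiv.Perm (Fin d))) :
    Matrix (Fin d → Fin n) (Fin d → Fin n) ℤ :=
  fun v w => ∑ σ : Equiv.Perm (Fin d), if w ∘ σ = v then c.coeff σ else 0

theorem toMatrix_algAct (c : MonoidAlgebra ℤ (Equiv.Perm (Fin d))) :
    LinearMap.toMatrix (tensorPowerBasis R n d) (tensorPowerBasis R n d) (algAct R (Fin n → R) c)
      = (algActMatrix n d c).map (Int.cast : ℤ → R) := by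
  ext v w
  have hact : algAct R (Fin n → R) c (tensorPowerBasis R n d w)
      = ∑ σ, c.coeff σ • tensorPowerBasis R n d (w ∘ σ) := by
    rw [algAct, Finsupp.sum_fintype _ _ fun σ => zero_smul ℤ (placePerm R (Fin n → R) σ),
      LinearMap.sum_apply]
    refine Finset.sum_congr rfl fun σ _ => ?_
    exact congrArg (c.coeff σ • ·) (placePerm_tensorPowerBasis R n d σ w)
  rw [LinearMap.toMatrix_apply, hact, map_sum, Finsupp.finsetSum_apply]
  simp only [map_zsmul, Basis.repr_self, Finsupp.smul_apply, Finsupp.single_apply]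
  simp [algActMatrix, apply_ite (Int.cast : ℤ → R)]

end PlaceAction

theorem finrank_weylModule_eq_rank {d : ℕ} (μ : Nat.Partition d) (n : ℕ) (K : Type*) [Field K] :
    finrank K (weylModule K (Fin n → K) μ)
      = ((algActMatrix n d (youngSymmetrizer μ)).map (Int.cast : ℤ → K)).rank := by
  rw [← toMatrix_algAct, Matrix.rank_eq_finrank_range_toLin _ (tensorPowerBasis K n d)
    (tensorPowerBasis K n d), Matrix.toLin_toMatrix, weylModule]

theorem weylModule_finrank_eq_general (d : ℕ) (μ : Nat.Partition d) (n : ℕ)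
    (F : Type*) [Field F] [CharZero F] :
    Module.finrank F (weylModule F (Fin n → F) μ)
      = Module.finrank ℚ (weylModule ℚ (Fin n → ℚ) μ) := by
  have hcast : (Int.cast : ℤ → F) = algebraMap ℚ F ∘ (Int.cast : ℤ → ℚ) := by
    funext z
    simp
  rw [finrank_weylModule_eq_rank, finrank_weylModule_eq_rank, hcast, ← Matrix.map_map,
    Matrix.rank_map_algebraMap]

/-- For every field `F` of characteristic zero,
`dim_F 𝕊_μ(Fⁿ) = dim_ℚ 𝕊_μ(ℚⁿ)`: the dimension of the Weyl module of an `n`-dimensional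
vector space depends only on `μ` and `n`, not on the characteristic-zero field. -/
theorem weylModule_finrank_eq (d : ℕ) (hd : 0 < d) (μ : Nat.Partition d) (n : ℕ)
    (F : Type*) [Field F] [CharZero F] :
    Module.finrank F (weylModule F (Fin n → F) μ)
      = Module.finrank ℚ (weylModule ℚ (Fin n → ℚ) μ) :=
  weylModule_finrank_eq_general d μ n F
end

section
/- Let μ be a partition of a positive integer d, F a field of characteristic zero, G a group, and ρ, ρ' : G → GL_n(F) two representations such that tr ρ(g) = tr ρ'(g) for all g ∈ G. Then tr (𝕊_μρ)(g) = tr (𝕊_μρ')(g) for all g ∈ G, where 𝕊_μρ denotes the representation of G on 𝕊_μ(F^n) induced by ρ. -/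
open scoped TensorProduct

theorem map_comp_placePerm (R : Type*) [CommRing R] (M M' : Type*) [AddCommGroup M]
    [Module R M] [AddCommGroup M'] [Module R M'] {d : ℕ} (φ : M →ₗ[R] M')
    (σ : Equiv.Perm (Fin d)) :
    (PiTensorProduct.map fun _ : Fin d => φ) ∘ₗ placePerm R M σ
      = placePerm R M' σ ∘ₗ (PiTensorProduct.map fun _ : Fin d => φ) := by
  ext m
  simp [placePerm, MultilinearMap.domDomCongr]

theorem map_comp_algAct (R : Type*) [CommRing R] (M M' : Type*) [AddCommGroup M]
    [Module R M] [AddCommGroup M'] [Module R M'] {d : ℕ} (φ : M →ₗ[R] M')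
    (x : MonoidAlgebra ℤ (Equiv.Perm (Fin d))) :
    (PiTensorProduct.map fun _ : Fin d => φ) ∘ₗ algAct R M x
      = algAct R M' x ∘ₗ (PiTensorProduct.map fun _ : Fin d => φ) := by
  unfold algAct
  refine LinearMap.ext fun v => ?_
  rw [Finsupp.sum, Finsupp.sum]
  simp only [LinearMap.comp_apply, LinearMap.sum_apply, map_sum, LinearMap.smul_apply,
    map_zsmul]
  refine Finset.sum_congr rfl fun a _ => ?_
  have h := LinearMap.congr_fun (map_comp_placePerm R M M' φ a) v
  simp only [LinearMap.comp_apply] at h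
  have e1 := map_zsmul (LinearMap.applyₗ (R := R) v) (x.coeff a) (placePerm R M a)
  have e2 := map_zsmul (LinearMap.applyₗ (R := R) ((PiTensorProduct.map fun _ : Fin d => φ) v))
    (x.coeff a) (placePerm R M' a)
  simp only [LinearMap.applyₗ_apply_apply] at e1 e2
  rw [e1, e2, map_zsmul, h]

/-- A linear map `φ : M → M'` induces, via its `d`-th tensor power, a map
`𝕊_μ M → 𝕊_μ M'` between the Weyl modules. -/
theorem weylModule_stable (R : Type*) [CommRing R] (M M' : Type*) [AddCommGroup M]
    [Module R M] [AddCommGroup M'] [Module R M'] {d : ℕ} (μ : Nat.Partition d)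
    (φ : M →ₗ[R] M') :
    ∀ x ∈ weylModule R M μ, (PiTensorProduct.map fun _ : Fin d => φ) x ∈ weylModule R M' μ := by
  rintro x ⟨y, rfl⟩
  exact ⟨(PiTensorProduct.map fun _ : Fin d => φ) y,
    (LinearMap.congr_fun (map_comp_algAct R M M' φ (youngSymmetrizer μ)) y).symm⟩

/-- The endomorphism of the Weyl module `𝕊_μ M` induced by an endomorphism `f` of `M`:
the restriction of `f^{⊗d}` to the submodule `𝕊_μ M ⊆ M^{⊗d}`. -/
noncomputable def schurMap (R : Type*) [CommRing R] (M : Type*) [AddCommGroup M] [Module R M]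
    {d : ℕ} (μ : Nat.Partition d) (f : M →ₗ[R] M) :
    weylModule R M μ →ₗ[R] weylModule R M μ :=
  (PiTensorProduct.map fun _ : Fin d => f).restrict (weylModule_stable R M M μ f)

/-- The map `𝕊_μ M → 𝕊_μ M'` induced by a linear map `φ : M → M'`. -/
noncomputable def weylMap (R : Type*) [CommRing R] (M M' : Type*) [AddCommGroup M]
    [Module R M] [AddCommGroup M'] [Module R M'] {d : ℕ} (μ : Nat.Partition d)
    (φ : M →ₗ[R] M') : weylModule R M μ →ₗ[R] weylModule R M' μ :=
  (PiTensorProduct.map fun _ : Fin d => φ).restrict (weylModule_stable R M M' μ φ)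

/-!
In characteristic zero the group algebra `F[𝔖_d]` is semisimple (Maschke), so the left ideal
generated by `c_μ` is generated by an idempotent `e`. The action of `e` on `M^{⊗d}` is then a
projection onto `𝕊_μ M` commuting with `f^{⊗d}`, whence `tr (𝕊_μ f) = Σ_σ e_σ tr (f^{⊗d} ∘ P_σ)`
for one `e` and all `f`. For a matrix `A`, `tr (A^{⊗d} ∘ P_σ)` is the product, over the cycles of
`σ`, of `tr (A ^ length)`, and `tr (ρ g ^ k) = tr (ρ (g ^ k)) = tr (ρ' (g ^ k)) = tr (ρ' g ^ k)`.
-/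

open Equiv

theorem IsSemisimpleRing.exists_isIdempotentElem_mul_eq {A : Type*} [Ring A] [IsSemisimpleRing A]
    (c : A) : ∃ e : A, IsIdempotentElem e ∧ c * e = c ∧ ∃ r, e = r * c := by
  obtain ⟨e, he, hspan⟩ := IsSemisimpleRing.ideal_eq_span_idempotent (Ideal.span {c})
  obtain ⟨a, hc⟩ := Ideal.mem_span_singleton'.mp (hspan ▸ Ideal.mem_span_singleton_self c)
  obtain ⟨r, hr⟩ := Ideal.mem_span_singleton'.mp (hspan ▸ Ideal.mem_span_singleton_self e)
  exact ⟨e, he, by rw [← hc, mul_assoc, he.eq], r, hr.symm⟩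

theorem LinearMap.trace_restrict_eq_trace_comp {K V : Type*} [Field K] [AddCommGroup V]
    [Module K V] [FiniteDimensional K V] {W : Submodule K V} {π T : Module.End K V}
    (hπ : IsIdempotentElem π) (hW : LinearMap.range π = W) (hT : ∀ x ∈ W, T x ∈ W) :
    LinearMap.trace K W (T.restrict hT) = LinearMap.trace K V (T ∘ₗ π) := by
  have hπW (x : V) : π x ∈ W := hW ▸ LinearMap.mem_range_self π x
  have hπ_id (w : W) : π w = w := by
    obtain ⟨y, hy⟩ : (w : V) ∈ LinearMap.range π := hW.symm ▸ w.2
    rw [← hy, ← Module.End.mul_apply, hπ.eq]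
  let p : V →ₗ[K] W := π.codRestrict W hπW
  calc LinearMap.trace K W (T.restrict hT)
      = LinearMap.trace K W (p ∘ₗ W.subtype ∘ₗ T.restrict hT) := by
        congr 1; ext w; exact (hπ_id _).symm
    _ = LinearMap.trace K V (W.subtype ∘ₗ T.restrict hT ∘ₗ p) := LinearMap.trace_comp_comm' _ _
    _ = LinearMap.trace K V (T ∘ₗ π) := rfl

namespace Matrix

variable {ι ι' κ R : Type*} [Fintype ι] [DecidableEq ι] [Fintype κ] [CommSemiring R]

/-- The product, over the cycles `(i, σ i, σ² i, …)` of `σ`, of `trace (M i * M (σ i) * ⋯)`. -/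
def permTrace (M : ι → Matrix κ κ R) (σ : Perm ι) : R :=
  ∑ m : ι → κ, ∏ i, M i (m i) (m (σ i))

theorem permTrace_permCongr [Fintype ι'] [DecidableEq ι'] (e : ι ≃ ι') (M : ι' → Matrix κ κ R)
    (σ : Perm ι) : permTrace M (e.permCongr σ) = permTrace (M ∘ e) σ := by
  unfold permTrace
  rw [← (e.arrowCongr (Equiv.refl κ)).symm.sum_comp]
  refine Fintype.sum_congr _ _ fun m => ?_
  rw [← e.prod_comp]
  simp [permCongr_apply]

theorem permTrace_of_isEmpty [IsEmpty ι] (M : ι → Matrix κ κ R) (σ : Perm ι) :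
    permTrace M σ = 1 := by
  simp [permTrace]

theorem permTrace_option (M : Option ι → Matrix κ κ R) (σ : Perm (Option ι)) :
    permTrace M σ = ∑ v : κ, ∑ m : ι → κ,
      M none v ((σ none).elim v m) * ∏ i, M (some i) (m i) ((σ (some i)).elim v m) := by
  have elim_eq (v : κ) (m : ι → κ) (o : Option ι) :
      (piOptionEquivProd (β := fun _ => κ)).symm (v, m) o = o.elim v m := by
    cases o <;> rfl
  unfold permTrace
  rw [← (piOptionEquivProd (β := fun _ => κ)).symm.sum_comp, Fintype.sum_prod_type]
  simp only [Fintype.prod_option, elim_eq, Option.elim_none, Option.elim_some]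

theorem permTrace_optionCongr (M : Option ι → Matrix κ κ R) (τ : Perm ι) :
    permTrace M τ.optionCongr = (M none).trace * permTrace (M ∘ some) τ := by
  simp only [permTrace_option, optionCongr_apply, Option.map_none, Option.map_some,
    Option.elim_none, Option.elim_some, ← Finset.mul_sum]
  rw [trace, Finset.sum_mul]
  rfl

/-- Summing out the index at `none` contracts the two matrices meeting there. -/
theorem permTrace_swap_mul_optionCongr (M : Option ι → Matrix κ κ R) (a : ι) (τ : Perm ι) :
    permTrace M (Equiv.swap none (some a) * τ.optionCongr)
      = permTrace (Function.update (M ∘ some) (τ.symm a) (M (some (τ.symm a)) * M none)) τ := by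
  set σ := Equiv.swap none (some a) * τ.optionCongr
  set p := τ.symm a
  have hσ_none : σ none = some a := by simp [σ]
  have hσ_p : σ (some p) = none := by simp [σ, p]
  have hσ_ne (i : ι) (hi : i ≠ p) : σ (some i) = some (τ i) := by
    have : τ i ≠ a := fun h => hi (by simp [p, ← h])
    simp [σ, swap_apply_of_ne_of_ne, this]
  rw [permTrace_option, Finset.sum_comm]
  unfold permTrace
  refine Fintype.sum_congr _ _ fun m => ?_
  set X := ∏ i ∈ {p}ᶜ, M (some i) (m i) (m (τ i))
  have hX (v : κ) : ∏ i ∈ {p}ᶜ, M (some i) (m i) ((σ (some i)).elim v m) = X :=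
    Finset.prod_congr rfl fun i hi => by
      rw [hσ_ne i (by simpa using hi)]
      rfl
  calc _ = ∑ v, M none v (m a) * (M (some p) (m p) v * X) := by
        simp only [Fintype.prod_eq_mul_prod_compl p, hσ_none, hσ_p, hX, Option.elim_none,
          Option.elim_some]
    _ = (M (some p) * M none) (m p) (m a) * X := by
        rw [mul_apply, Finset.sum_mul]
        exact Fintype.sum_congr _ _ fun v => by ring
    _ = _ := by
        rw [Fintype.prod_eq_mul_prod_compl p, Function.update_self, apply_symm_apply]
        congr 1
        refine Finset.prod_congr rfl fun i hi => ?_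
        rw [Function.update_of_ne (by simpa using hi)]
        rfl

theorem permTrace_pow_eq_of_trace_pow_eq [DecidableEq κ] {A B : Matrix κ κ R}
    (h : ∀ k : ℕ, (A ^ k).trace = (B ^ k).trace) (σ : Perm ι) (w : ι → ℕ) :
    permTrace (fun i => A ^ w i) σ = permTrace (fun i => B ^ w i) σ := by
  refine Fintype.induction_empty_option (P := fun ι _ => ∀ [DecidableEq ι] (σ : Perm ι)
    (w : ι → ℕ), permTrace (fun i => A ^ w i) σ = permTrace (fun i => B ^ w i) σ)
    ?_ ?_ ?_ ι σ w
  · intro α β _ e ih _ σ w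
    let : Fintype α := .ofEquiv β e.symm
    classical
    obtain ⟨τ, rfl⟩ := e.permCongr.surjective σ
    simp only [permTrace_permCongr]
    exact ih τ (w ∘ e)
  · intros
    simp only [permTrace_of_isEmpty]
  · intro α _ ih inst σ w
    classical
    obtain rfl : inst = fun a b => Option.instDecidableEq a b := Subsingleton.elim _ _
    obtain ⟨⟨_ | a, τ⟩, rfl⟩ := Perm.decomposeOption.symm.surjective σ
    · simp only [Perm.decomposeOption_symm_apply, swap_self, ← Perm.one_def, one_mul,
        permTrace_optionCongr]
      exact congr_arg₂ (· * ·) (h _) (ih τ (w ∘ some))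
    · have merge (C : Matrix κ κ R) :
          Function.update ((fun i => C ^ w i) ∘ some) (τ.symm a)
              (C ^ w (some (τ.symm a)) * C ^ w none)
            = fun i => C ^ Function.update (w ∘ some) (τ.symm a)
                (w (some (τ.symm a)) + w none) i := by
        funext i
        rw [Function.apply_update (fun _ k => C ^ k), pow_add]
        rfl
      simp only [Perm.decomposeOption_symm_apply, permTrace_swap_mul_optionCongr, merge]
      exact ih τ _

end Matrix

theorem trace_map_comp_placePerm {R κ : Type*} [CommRing R] [Fintype κ] [DecidableEq κ] {d : ℕ}
    (A : Matrix κ κ R) (σ : Perm (Fin d)) :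
    LinearMap.trace R _ ((PiTensorProduct.map fun _ => Matrix.toLin' A) ∘ₗ placePerm R (κ → R) σ)
      = Matrix.permTrace (fun _ => A) σ := by
  let b := Basis.piTensorProduct fun _ : Fin d => Pi.basisFun R κ
  rw [LinearMap.trace_eq_matrix_trace R b, Matrix.trace, Matrix.permTrace]
  refine Fintype.sum_congr _ _ fun m => ?_
  simp [b, LinearMap.toMatrix_apply]

section PlacePermAction

variable (R : Type*) [CommRing R] (M : Type*) [AddCommGroup M] [Module R M] {d : ℕ}

theorem placePerm_one : placePerm R M (1 : Perm (Fin d)) = LinearMap.id := by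
  ext; simp

theorem placePerm_mul (σ τ : Perm (Fin d)) :
    placePerm R M (σ * τ) = placePerm R M τ ∘ₗ placePerm R M σ := by
  ext; simp

noncomputable def placePermHom : Perm (Fin d) →* (Module.End R (⨂[R] _ : Fin d, M))ᵐᵒᵖ where
  toFun σ := .op (placePerm R M σ)
  map_one' := by rw [placePerm_one]; rfl
  map_mul' σ τ := by rw [placePerm_mul]; rfl

noncomputable def placePermAction :
    MonoidAlgebra R (Perm (Fin d)) →ₐ[R] (Module.End R (⨂[R] _ : Fin d, M))ᵐᵒᵖ :=
  MonoidAlgebra.lift R _ _ (placePermHom R M)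

theorem unop_placePermAction (x : MonoidAlgebra R (Perm (Fin d))) :
    (placePermAction R M x).unop = x.coeff.sum fun σ a => a • placePerm R M σ := by
  rw [placePermAction, MonoidAlgebra.lift_apply, MulOpposite.unop_finsuppSum]
  rfl

theorem algAct_eq_unop_placePermAction (x : MonoidAlgebra ℤ (Perm (Fin d))) :
    algAct R M x = (placePermAction R M (MonoidAlgebra.mapRingHom _ (algebraMap ℤ R) x)).unop := by
  rw [placePermAction, MonoidAlgebra.lift_mapRingHom_algebraMap, MonoidAlgebra.lift_apply, algAct,
    MulOpposite.unop_finsuppSum]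
  rfl

theorem weylModule_eq_range_placePermAction (μ : Nat.Partition d)
    {e r : MonoidAlgebra R (Perm (Fin d))}
    (hce : MonoidAlgebra.mapRingHom _ (algebraMap ℤ R) (youngSymmetrizer μ) * e
      = MonoidAlgebra.mapRingHom _ (algebraMap ℤ R) (youngSymmetrizer μ))
    (her : e = r * MonoidAlgebra.mapRingHom _ (algebraMap ℤ R) (youngSymmetrizer μ)) :
    weylModule R M μ = LinearMap.range (placePermAction R M e).unop := by
  rw [weylModule, algAct_eq_unop_placePermAction]
  apply le_antisymm
  · rw [← hce, map_mul, MulOpposite.unop_mul, Module.End.mul_eq_comp]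
    exact LinearMap.range_comp_le_range _ _
  · rw [her, map_mul, MulOpposite.unop_mul, Module.End.mul_eq_comp]
    exact LinearMap.range_comp_le_range _ _

end PlacePermAction

theorem exists_trace_schurMap_eq_sum (F : Type*) [Field F] [CharZero F] {d : ℕ}
    (μ : Nat.Partition d) (M : Type*) [AddCommGroup M] [Module F M] [FiniteDimensional F M] :
    ∃ e : MonoidAlgebra F (Perm (Fin d)), ∀ f : Module.End F M,
      LinearMap.trace F _ (schurMap F M μ f) = e.coeff.sum fun σ a =>
        a * LinearMap.trace F _ ((PiTensorProduct.map fun _ => f) ∘ₗ placePerm F M σ) := by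
  obtain ⟨e, he, hce, r, her⟩ := IsSemisimpleRing.exists_isIdempotentElem_mul_eq
    (MonoidAlgebra.mapRingHom _ (algebraMap ℤ F) (youngSymmetrizer μ))
  have hπ : IsIdempotentElem (placePermAction F M e).unop := by
    rw [IsIdempotentElem, ← MulOpposite.unop_mul, ← map_mul, he.eq]
  refine ⟨e, fun f => ?_⟩
  rw [schurMap, LinearMap.trace_restrict_eq_trace_comp hπ
    (weylModule_eq_range_placePermAction F M μ hce her).symm, unop_placePermAction, Finsupp.sum,
    ← Module.End.mul_eq_comp, Finset.mul_sum, map_sum, Finsupp.sum]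
  simp only [mul_smul_comm, map_smul, smul_eq_mul, Module.End.mul_eq_comp]

theorem trace_schur_eq_of_trace_eq_general (d : ℕ) (μ : Nat.Partition d)
    (F : Type*) [Field F] [CharZero F] (G : Type*) [Group G] (n : ℕ)
    (ρ ρ' : G →* (Matrix (Fin n) (Fin n) F)ˣ)
    (htr : ∀ g : G, ((ρ g : Matrix (Fin n) (Fin n) F)).trace
        = ((ρ' g : Matrix (Fin n) (Fin n) F)).trace) :
    ∀ g : G,
      LinearMap.trace F (weylModule F (Fin n → F) μ)
          (schurMap F (Fin n → F) μ (Matrix.toLin' (ρ g : Matrix (Fin n) (Fin n) F)))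
        = LinearMap.trace F (weylModule F (Fin n → F) μ)
          (schurMap F (Fin n → F) μ (Matrix.toLin' (ρ' g : Matrix (Fin n) (Fin n) F))) := by
  intro g
  have hpow (k : ℕ) : ((ρ g : Matrix (Fin n) (Fin n) F) ^ k).trace
      = ((ρ' g : Matrix (Fin n) (Fin n) F) ^ k).trace := by
    simpa only [map_pow, Units.val_pow_eq_pow_val] using htr (g ^ k)
  obtain ⟨e, he⟩ := exists_trace_schurMap_eq_sum F μ (Fin n → F)
  simp only [he, trace_map_comp_placePerm]
  refine Finsupp.sum_congr fun σ _ => ?_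
  simpa only [pow_one] using
    congr_arg (e.coeff σ * ·) (Matrix.permTrace_pow_eq_of_trace_pow_eq hpow σ fun _ => 1)

/-- Over a field `F` of characteristic zero, two representations
`ρ, ρ' : G → GL_n(F)` with equal traces have Weyl modules `𝕊_μρ, 𝕊_μρ'` with equal traces. -/
theorem trace_schur_eq_of_trace_eq (d : ℕ) (hd : 0 < d) (μ : Nat.Partition d)
    (F : Type*) [Field F] [CharZero F] (G : Type*) [Group G] (n : ℕ)
    (ρ ρ' : G →* (Matrix (Fin n) (Fin n) F)ˣ)
    (htr : ∀ g : G, ((ρ g : Matrix (Fin n) (Fin n) F)).trace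
        = ((ρ' g : Matrix (Fin n) (Fin n) F)).trace) :
    ∀ g : G,
      LinearMap.trace F (weylModule F (Fin n → F) μ)
          (schurMap F (Fin n → F) μ (Matrix.toLin' (ρ g : Matrix (Fin n) (Fin n) F)))
        = LinearMap.trace F (weylModule F (Fin n → F) μ)
          (schurMap F (Fin n → F) μ (Matrix.toLin' (ρ' g : Matrix (Fin n) (Fin n) F))) :=
  trace_schur_eq_of_trace_eq_general d μ F G n ρ ρ' htr
end

section
/- Let O be a discrete valuation ring with maximal ideal m, fraction field Q and residue field κ, let G be a group, and let ρ : G → GL_n(O) be a representation whose reduction modulo m, ρ̄ : G → GL_n(κ), is irreducible (i.e. κ^n has no G-stable subspace other than 0 and κ^n). Then the representation ρ ⊗_O Q : G → GL_n(Q) is irreducible. -/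
/-!
The integral points `L` of a `G`-stable subspace `W ⊆ Qⁿ` form a `G`-stable lattice in `Oⁿ`, and
its reduction is a `G`-stable subspace of `κⁿ`, hence `0` or `κⁿ`. If it is `κⁿ`, Nakayama gives
`L = Oⁿ`, so `W = Qⁿ`. If it is `0`, then `L ⊆ ϖ Oⁿ`; as `W` is a `Q`-subspace, `ϖ x ∈ L` forces
`x ∈ L`, so `L ⊆ ϖ L` and Nakayama gives `L = 0`; clearing denominators, `W = 0`.
-/

open scoped Pointwise Matrix
open IsLocalRing

section

variable {R S : Type*} [CommRing R] [CommRing S] {ι : Type*}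

namespace RingHom

variable (f : R →+* S)

def compLeftₛₗ (ι : Type*) : (ι → R) →ₛₗ[f] ι → S where
  toFun x := f ∘ x
  map_add' x y := by ext; simp
  map_smul' a x := by ext; simp

@[simp]
lemma compLeftₛₗ_apply (x : ι → R) (i : ι) : f.compLeftₛₗ ι x i = f (x i) := rfl

lemma mulVec_map_compLeftₛₗ [Fintype ι] (A : Matrix ι ι R) (x : ι → R) :
    A.map f *ᵥ f.compLeftₛₗ ι x = f.compLeftₛₗ ι (A *ᵥ x) :=
  funext fun i => (f.map_mulVec A x i).symm

lemma mulVec_mem_comap_compLeftₛₗ [Fintype ι] {A : Matrix ι ι R} {p : Submodule S (ι → S)}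
    (hp : ∀ x ∈ p, A.map f *ᵥ x ∈ p) {x : ι → R} (hx : x ∈ p.comap (f.compLeftₛₗ ι)) :
    A *ᵥ x ∈ p.comap (f.compLeftₛₗ ι) := by
  simpa only [Submodule.mem_comap, ← mulVec_map_compLeftₛₗ] using hp _ hx

lemma mulVec_mem_map_compLeftₛₗ [Fintype ι] [RingHomSurjective f] {A : Matrix ι ι R}
    {p : Submodule R (ι → R)} (hp : ∀ x ∈ p, A *ᵥ x ∈ p) {y : ι → S}
    (hy : y ∈ p.map (f.compLeftₛₗ ι)) : A.map f *ᵥ y ∈ p.map (f.compLeftₛₗ ι) := by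
  obtain ⟨x, hx, rfl⟩ := hy
  exact ⟨A *ᵥ x, hp x hx, (f.mulVec_map_compLeftₛₗ A x).symm⟩

end RingHom

lemma Submodule.eq_top_of_comap_compLeftₛₗ_eq_top [Finite ι] (f : R →+* S)
    {p : Submodule S (ι → S)} (h : p.comap (f.compLeftₛₗ ι) = ⊤) : p = ⊤ := by
  classical
  rw [eq_top_iff, ← (Pi.basisFun S ι).span_eq, Submodule.span_le]
  rintro _ ⟨i, rfl⟩
  have hi : f.compLeftₛₗ ι (Pi.single i 1) = Pi.single i 1 := by
    ext j
    by_cases hij : j = i <;> simp [hij]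
  rw [SetLike.mem_coe, Pi.basisFun_apply, ← hi]
  exact h.ge Submodule.mem_top

lemma Submodule.smul_mem_comap_iff_of_isUnit {M N : Type*} [AddCommGroup M] [Module R M]
    [AddCommGroup N] [Module S N] {f : R →+* S} (F : M →ₛₗ[f] N) (p : Submodule S N) {a : R}
    (ha : IsUnit (f a)) {x : M} : a • x ∈ p.comap F ↔ x ∈ p.comap F := by
  simp only [mem_comap, map_smulₛₗ, p.smul_mem_iff_of_isUnit ha]

theorem Submodule.eq_bot_of_le_smul_top {M : Type*} [AddCommGroup M] [Module R M]
    [IsNoetherianRing R] [Module.Finite R M] {ϖ : R} (hϖ : ϖ ∈ (⊥ : Ideal R).jacobson)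
    {L : Submodule R M} (hdiv : ∀ x, ϖ • x ∈ L → x ∈ L) (hL : L ≤ ϖ • ⊤) : L = ⊥ := by
  refine eq_bot_of_le_smul_of_le_jacobson_bot (Ideal.span {ϖ}) L (IsNoetherian.noetherian L) ?_
    ((Ideal.span_singleton_le_iff_mem _).2 hϖ)
  rw [ideal_span_singleton_smul]
  intro x hx
  obtain ⟨y, -, rfl⟩ := (mem_smul_pointwise_iff_exists _ _ _).1 (hL hx)
  exact smul_mem_pointwise_smul _ _ _ (hdiv y hx)

theorem IsLocalization.eq_bot_of_comap_compLeftₛₗ_eq_bot [Algebra R S] (M : Submonoid R)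
    [IsLocalization M S] [Finite ι] {W : Submodule S (ι → S)}
    (h : W.comap ((algebraMap R S).compLeftₛₗ ι) = ⊥) : W = ⊥ := by
  refine (Submodule.eq_bot_iff W).2 fun w hw => ?_
  obtain ⟨b, hb⟩ := exist_integer_multiples_of_finite M w
  choose v hv using hb
  have hv' : (algebraMap R S).compLeftₛₗ ι v = algebraMap R S b • w :=
    funext fun i => (hv i).trans (Algebra.smul_def _ _)
  have hvW : v ∈ W.comap ((algebraMap R S).compLeftₛₗ ι) := by
    rw [Submodule.mem_comap, hv']
    exact W.smul_mem _ hw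
  have hv0 : algebraMap R S b • w = 0 := by
    rw [← hv', (Submodule.mem_bot R).1 (h ▸ hvW : v ∈ ⊥), map_zero]
  exact (map_units S b).smul_eq_zero.1 hv0

namespace IsLocalRing

variable [IsLocalRing R]

instance : RingHomSurjective (residue R) := ⟨residue_surjective⟩

lemma ker_residue_compLeftₛₗ [Finite ι] :
    LinearMap.ker ((residue R).compLeftₛₗ ι) = maximalIdeal R • ⊤ := by
  classical
  have := Fintype.ofFinite ι
  refine le_antisymm (fun x hx => ?_) (Submodule.smul_le.2 fun a ha y _ => ?_)
  · rw [pi_eq_sum_univ x]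
    refine Submodule.sum_mem _ fun i _ => Submodule.smul_mem_smul ?_ Submodule.mem_top
    exact (residue_eq_zero_iff _).1 (congrFun hx i)
  · ext i
    simp [(residue_eq_zero_iff a).2 ha]

lemma eq_top_of_map_residue_compLeftₛₗ_eq_top [Finite ι] {L : Submodule R (ι → R)}
    (h : L.map ((residue R).compLeftₛₗ ι) = ⊤) : L = ⊤ := by
  have hsup : L ⊔ maximalIdeal R • ⊤ = ⊤ := by
    rw [← ker_residue_compLeftₛₗ, ← Submodule.comap_map_eq, h, Submodule.comap_top]
  exact top_le_iff.1 <| Submodule.le_of_le_smul_of_le_jacobson_bot Module.Finite.fg_top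
    (maximalIdeal_le_jacobson ⊥) hsup.ge

end IsLocalRing

end

/-- Let `O` be a discrete valuation ring with maximal ideal `m`, fraction
field `Q` and residue field `κ`, and `ρ : G → GL_n(O)` a representation whose reduction
mod `m` is irreducible over `κ`.  Then `ρ ⊗_O Q` is irreducible. -/
theorem irreducible_of_residual_irreducible
    (O : Type*) [CommRing O] [IsDomain O] [IsDiscreteValuationRing O]
    (Q : Type*) [Field Q] [Algebra O Q] [IsFractionRing O Q]
    (G : Type*) [Group G] (n : ℕ)
    (ρ : G →* (Matrix (Fin n) (Fin n) O)ˣ)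
    (hirr : ∀ W : Submodule (IsLocalRing.ResidueField O)
        (Fin n → IsLocalRing.ResidueField O),
      (∀ g : G, ∀ x ∈ W,
        Matrix.mulVec ((ρ g : Matrix (Fin n) (Fin n) O).map (IsLocalRing.residue O)) x ∈ W) →
      W = ⊥ ∨ W = ⊤) :
    ∀ W : Submodule Q (Fin n → Q),
      (∀ g : G, ∀ x ∈ W,
        Matrix.mulVec ((ρ g : Matrix (Fin n) (Fin n) O).map (algebraMap O Q)) x ∈ W) →
      W = ⊥ ∨ W = ⊤ := by
  intro W hW
  set L := W.comap ((algebraMap O Q).compLeftₛₗ (Fin n))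
  have hL (g : G) : ∀ x ∈ L, (ρ g : Matrix (Fin n) (Fin n) O) *ᵥ x ∈ L :=
    fun _ => (algebraMap O Q).mulVec_mem_comap_compLeftₛₗ (hW g)
  rcases hirr (L.map ((residue O).compLeftₛₗ (Fin n)))
    (fun g _ => (residue O).mulVec_mem_map_compLeftₛₗ (hL g)) with hbot | htop
  · left
    obtain ⟨ϖ, hϖ⟩ := IsDiscreteValuationRing.exists_irreducible O
    have hϖQ : IsUnit (algebraMap O Q ϖ) :=
      ((map_ne_zero_iff _ (IsFractionRing.injective O Q)).2 hϖ.ne_zero).isUnit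
    have hLϖ : L ≤ ϖ • ⊤ := by
      rw [← Submodule.ideal_span_singleton_smul, ← hϖ.maximalIdeal_eq, ← ker_residue_compLeftₛₗ]
      exact LinearMap.le_ker_iff_map.2 hbot
    refine IsLocalization.eq_bot_of_comap_compLeftₛₗ_eq_bot (nonZeroDivisors O) ?_
    exact Submodule.eq_bot_of_le_smul_top
      (maximalIdeal_le_jacobson ⊥ ((mem_maximalIdeal ϖ).2 hϖ.not_isUnit))
      (fun _ => (Submodule.smul_mem_comap_iff_of_isUnit _ W hϖQ).1) hLϖ
  · right
    exact Submodule.eq_top_of_comap_compLeftₛₗ_eq_top _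
      (eq_top_of_map_residue_compLeftₛₗ_eq_top htop)
end
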